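/- Let K be a field (an algebraic number field or p-adic field) and Q a quaternion algebra over K. If A, B are elements of Q with the same reduced norm and reduced trace, and the trace squared is not equal to 4 times the norm, then there exists an invertible element J of Q with J*A*J⁻¹ = B. -/

import Mathlib

open scoped Quaternion Classical

/-- `K` is a p-adic field: a finite extension of `ℚ_[p]` for some prime `p`. -/
def IsPAdicField (K : Type) [Field K] : Prop :=
  ∃ p : ℕ, ∃ hp : p.Prime,
    letI : Fact p.Prime := ⟨hp⟩
    ∃ f : ℚ_[p] →+* K, letI := f.toAlgebra; FiniteDimensional ℚ_[p] K

/-! Write `A = r + α` and `B = s + β` with `r, s` scalars and `α, β` pure. Equal traces give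
`r = s`, equal norms then give `α² = β²`, and the separability condition `S² - 4N = 4 α² ≠ 0`
says that this common square is a nonzero scalar (and that `2 ≠ 0` in `K`). From `α² = β²` one
gets `(α + β) α = β (α + β)` and `(α - β) α = -β (α - β)`. Since `(α + β)² + (α - β)² = 4 α² ≠ 0`,
one of `α ± β` is a pure quaternion with nonzero scalar square, hence invertible; in the second
case one composes with an invertible pure quaternion anticommuting with `β`. -/

section Ring

variable {R : Type*} [Ring R] {a b : R}

theorem semiconjBy_add_of_mul_self_eq (h : a * a = b * b) : SemiconjBy (a + b) a b := by
  rw [SemiconjBy, add_mul, mul_add, h, add_comm]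

theorem semiconjBy_sub_of_mul_self_eq (h : a * a = b * b) : SemiconjBy (a - b) a (-b) := by
  rw [SemiconjBy, sub_mul, mul_sub, h, neg_mul, neg_mul, neg_sub_neg]

end Ring

namespace QuaternionAlgebra

section CommRing

variable {R : Type*} [CommRing R] {c₁ c₂ : R}

theorem self_add_star_eq_coe (a : ℍ[R,c₁,c₂]) : a + star a = ↑(2 * a.re) := by
  simpa using self_add_star' a

theorem self_mul_star_eq_coe_sub (a : ℍ[R,c₁,c₂]) : a * star a = ↑(a.re ^ 2) - a.im * a.im := by
  ext <;> simp [sq] <;> ring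

theorem self_add_star_sq_sub_four_mul_self_mul_star (a : ℍ[R,c₁,c₂]) :
    (a + star a) ^ 2 - 4 * (a * star a) = 4 * (a.im * a.im) := by
  rw [self_add_star_eq_coe, self_mul_star_eq_coe_sub, coe_mul, coe_pow, coe_ofNat]
  noncomm_ring

theorem mul_self_eq_coe_of_re_eq_zero {x : ℍ[R,c₁,c₂]} (hx : x.re = 0) : x * x = ↑(x * x).re := by
  ext <;> simp [hx] <;> ring

theorem mk_zero_mul_self (x y z : R) :
    (⟨0, x, y, z⟩ : ℍ[R,c₁,c₂]) * ⟨0, x, y, z⟩ = ↑(c₁ * x ^ 2 + c₂ * y ^ 2 - c₁ * c₂ * z ^ 2) := by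
  ext <;> simp [sq] <;> ring

end CommRing

variable {K : Type*} [Field K] {c₁ c₂ : K}

theorem isUnit_of_re_eq_zero_of_mul_self_ne_zero {x : ℍ[K,c₁,c₂]} (hx : x.re = 0)
    (h : x * x ≠ 0) : IsUnit x := by
  rw [mul_self_eq_coe_of_re_eq_zero hx] at h
  rw [← isUnit_mul_self_iff, mul_self_eq_coe_of_re_eq_zero hx, ← coe_algebraMap]
  exact (Ne.isUnit fun h0 => h (by rw [h0, coe_zero])).map _

theorem exists_unit_semiconjBy_neg (hc₁ : c₁ ≠ 0) (hc₂ : c₂ ≠ 0) (h2 : (2 : K) ≠ 0)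
    {b : ℍ[K,c₁,c₂]} (hb : b.re = 0) (hb2 : b * b ≠ 0) :
    ∃ g : ℍ[K,c₁,c₂]ˣ, SemiconjBy ↑g (-b) b := by
  obtain ⟨b₀, b₁, b₂, b₃⟩ := b
  obtain rfl : b₀ = 0 := hb
  have hq : c₁ * b₁ ^ 2 + c₂ * b₂ ^ 2 - c₁ * c₂ * b₃ ^ 2 ≠ 0 := fun h =>
    hb2 (by rw [mk_zero_mul_self, h, coe_zero])
  suffices ∃ x y z : K, c₁ * x ^ 2 + c₂ * y ^ 2 - c₁ * c₂ * z ^ 2 ≠ 0 ∧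
      SemiconjBy (⟨0, x, y, z⟩ : ℍ[K,c₁,c₂]) (-⟨0, b₁, b₂, b₃⟩) ⟨0, b₁, b₂, b₃⟩ by
    obtain ⟨x, y, z, hn, hg⟩ := this
    refine ⟨(isUnit_of_re_eq_zero_of_mul_self_ne_zero rfl ?_).unit, hg⟩
    rw [mk_zero_mul_self]
    exact fun h => hn (coe_inj.1 (h.trans coe_zero.symm))
  -- The three pure quaternions below are orthogonal to `b` for the norm form, so they anticommute
  -- with it; their squares are `c₁ * c₂` times these three scalars, which cannot all vanish.
  have : c₁ * b₁ ^ 2 + c₂ * b₂ ^ 2 ≠ 0 ∨ c₂ * b₃ ^ 2 - b₁ ^ 2 ≠ 0 ∨ c₁ * b₃ ^ 2 - b₂ ^ 2 ≠ 0 := by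
    by_contra! h
    obtain ⟨h₁, h₂, h₃⟩ := h
    exact hq (mul_left_cancel₀ h2 (by linear_combination h₁ - c₁ * h₂ - c₂ * h₃))
  have hc : c₁ * c₂ ≠ 0 := mul_ne_zero hc₁ hc₂
  rcases this with h | h | h
  · exact ⟨-(c₂ * b₂), c₁ * b₁, 0, by convert mul_ne_zero hc h using 1; ring,
      by ext <;> simp <;> ring⟩
  · exact ⟨-(c₂ * b₃), 0, -b₁, by convert mul_ne_zero hc h using 1; ring, by ext <;> simp <;> ring⟩
  · exact ⟨0, -(c₁ * b₃), -b₂, by convert mul_ne_zero hc h using 1; ring, by ext <;> simp <;> ring⟩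

theorem exists_unit_semiconjBy_of_mul_self_eq (hc₁ : c₁ ≠ 0) (hc₂ : c₂ ≠ 0) (h2 : (2 : K) ≠ 0)
    {a b : ℍ[K,c₁,c₂]} (ha : a.re = 0) (hb : b.re = 0) (hab : a * a = b * b) (ha2 : a * a ≠ 0) :
    ∃ J : ℍ[K,c₁,c₂]ˣ, SemiconjBy ↑J a b := by
  by_cases hplus : (a + b) * (a + b) = 0
  · have hminus : (a - b) * (a - b) ≠ 0 := by
      intro hminus
      have h4 : (4 : K) • (a * a) = (a + b) * (a + b) + (a - b) * (a - b) := by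
        rw [← coe_mul_eq_smul, coe_ofNat]
        linear_combination (norm := noncomm_ring) 2 * hab
      rw [hplus, hminus, add_zero, smul_eq_zero] at h4
      have four_ne_zero : (4 : K) ≠ 0 := by
        rw [show (4 : K) = 2 * 2 by norm_num]
        exact mul_ne_zero h2 h2
      exact h4.elim four_ne_zero ha2
    obtain ⟨g, hg⟩ := exists_unit_semiconjBy_neg hc₁ hc₂ h2 hb (hab ▸ ha2)
    exact ⟨g * (isUnit_of_re_eq_zero_of_mul_self_ne_zero (by simp [ha, hb]) hminus).unit,
      hg.mul_left (semiconjBy_sub_of_mul_self_eq hab)⟩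
  · exact ⟨(isUnit_of_re_eq_zero_of_mul_self_ne_zero (by simp [ha, hb]) hplus).unit,
      semiconjBy_add_of_mul_self_eq hab⟩

end QuaternionAlgebra

open QuaternionAlgebra in
theorem stmt0_general (K : Type) [Field K]
    (c₁ c₂ : K) (hc₁ : c₁ ≠ 0) (hc₂ : c₂ ≠ 0)
    (A B : ℍ[K, c₁, c₂])
    (hN : A * star A = B * star B) (hS : A + star A = B + star B)
    (hsep : (A + star A) ^ 2 ≠ 4 * (A * star A)) :
    ∃ J : ℍ[K, c₁, c₂]ˣ, (J : ℍ[K, c₁, c₂]) * A * (J⁻¹ : ℍ[K, c₁, c₂]ˣ) = B := by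
  have hdisc : 4 * (A.im * A.im) ≠ 0 := by
    rw [← self_add_star_sq_sub_four_mul_self_mul_star]
    exact sub_ne_zero.2 hsep
  have h2 : (2 : K) ≠ 0 := fun h => left_ne_zero_of_mul hdisc <| by
    rw [← coe_ofNat, show (4 : K) = 2 * 2 by norm_num, h, zero_mul, coe_zero]
  have hre : A.re = B.re :=
    mul_left_cancel₀ h2 (coe_inj.1 (by rw [← self_add_star_eq_coe, ← self_add_star_eq_coe, hS]))
  have him : A.im * A.im = B.im * B.im := by
    rw [self_mul_star_eq_coe_sub, self_mul_star_eq_coe_sub, hre] at hN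
    exact sub_right_injective hN
  obtain ⟨J, hJ⟩ := exists_unit_semiconjBy_of_mul_self_eq hc₁ hc₂ h2 (re_im A) (re_im B) him
    (right_ne_zero_of_mul hdisc)
  refine ⟨J, (Units.mul_inv_eq_iff_eq_mul J).2 ?_⟩
  rw [← re_add_im A, ← re_add_im B, hre]
  exact SemiconjBy.add_right (coe_commute B.re _).symm hJ

theorem stmt0 (K : Type) [Field K] (hK : NumberField K ∨ IsPAdicField K)
    (c₁ c₂ : K) (hc₁ : c₁ ≠ 0) (hc₂ : c₂ ≠ 0)
    (A B : ℍ[K, c₁, c₂])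
    (hN : A * star A = B * star B) (hS : A + star A = B + star B)
    (hsep : (A + star A) ^ 2 ≠ 4 * (A * star A)) :
    ∃ J : ℍ[K, c₁, c₂]ˣ, (J : ℍ[K, c₁, c₂]) * A * (J⁻¹ : ℍ[K, c₁, c₂]ˣ) = B :=
  stmt0_general K c₁ c₂ hc₁ hc₂ A B hN hS hsep
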